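/- Suppose P(x) = ((⋯(x^2 - c_1)^2 ⋯)^2 - c_k ∈ ℤ[x] splits into linear factors over ℤ, k ≥ 3, and c_k > 0. Then there is an absolute constant λ > 0 with ln(c_1) ≥ 2λk; in particular c_1 grows at least exponentially in the length k of the chain. -/

import Mathlib

open Polynomial

noncomputable def chain (c : ℕ → ℤ) : ℕ → Polynomial ℤ
  | 0 => X
  | j + 1 => (chain c j) ^ 2 - C (c (j + 1))

def Crumbles (P : Polynomial ℤ) : Prop :=
  ∃ s : Multiset (Polynomial ℤ), (∀ q ∈ s, q.degree = 1) ∧ P = s.prod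

lemma monic_sq_sub_C {Q : Polynomial ℤ} (hQ : Q.Monic) (h1 : 1 ≤ Q.natDegree) (e : ℤ) :
    (Q ^ 2 - C e).Monic := by
  have hpow : (Q ^ 2).Monic := hQ.pow 2
  have hdeg : 0 < (Q ^ 2).degree := by
    rw [← natDegree_pos_iff_degree_pos, natDegree_pow]
    omega
  have h : Q ^ 2 - C e = Q ^ 2 + C (-e) := by rw [map_neg]; ring
  rw [h]
  exact hpow.add_of_left (lt_of_le_of_lt (degree_C_le) hdeg)

lemma monic_sub_C {Q : Polynomial ℤ} (hQ : Q.Monic) (h1 : 1 ≤ Q.natDegree) (e : ℤ) :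
    (Q - C e).Monic := by
  have hdeg : 0 < Q.degree := natDegree_pos_iff_degree_pos.mp h1
  have h : Q - C e = Q + C (-e) := by rw [map_neg]; ring
  rw [h]
  exact hQ.add_of_left (lt_of_le_of_lt (degree_C_le) hdeg)

lemma chain_natDegree (c : ℕ → ℤ) : ∀ j, (chain c j).natDegree = 2 ^ j
  | 0 => natDegree_X
  | j + 1 => by
    show ((chain c j) ^ 2 - C (c (j+1))).natDegree = 2 ^ (j+1)
    rw [natDegree_sub_C, natDegree_pow, chain_natDegree c j]
    ring

lemma chain_monic (c : ℕ → ℤ) : ∀ j, (chain c j).Monic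
  | 0 => monic_X
  | j + 1 => by
    have ih := chain_monic c j
    have h1 : 1 ≤ (chain c j).natDegree := by
      rw [chain_natDegree]
      exact Nat.one_le_two_pow
    exact monic_sq_sub_C ih h1 _

lemma crumbles_iff {P : Polynomial ℤ} (hP : P.Monic) :
    Crumbles P ↔ P.roots.card = P.natDegree := by
  constructor
  · rintro ⟨s, hs, rfl⟩
    have h0 : (0 : Polynomial ℤ) ∉ s := by
      intro h
      simpa using hs 0 h
    have hroots : s.prod.roots = s.bind roots := roots_multiset_prod s h0
    have hcard1 : ∀ q ∈ s, q.roots.card = 1 := by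
      intro q hq
      have hu : IsUnit q.leadingCoeff :=
        hP.isUnit_leadingCoeff_of_dvd (Multiset.dvd_prod hq)
      have hdeg : q.degree = 1 := hs q hq
      have hnd : q.natDegree = 1 := natDegree_eq_of_degree_eq_some hdeg
      have hq0 : q ≠ 0 := fun h => by simp [h] at hdeg
      have hql : q.leadingCoeff = q.coeff 1 := by rw [leadingCoeff, hnd]
      have hform : q = C (q.coeff 1) * X + C (q.coeff 0) :=
        eq_X_add_C_of_degree_le_one (le_of_eq hdeg)
      have ha : q.coeff 1 = 1 ∨ q.coeff 1 = -1 := by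
        rw [← Int.isUnit_iff, ← hql]; exact hu
      set a := q.coeff 1
      set b := q.coeff 0
      have hroot : q.eval (-(a * b)) = 0 := by
        rw [hform]
        simp only [eval_add, eval_mul, eval_C, eval_X]
        rcases ha with h | h <;> rw [h] <;> ring
      have hmem : -(a * b) ∈ q.roots := by
        rw [mem_roots hq0]; exact hroot
      have h1 : 1 ≤ q.roots.card := Multiset.card_pos.mpr (fun h => by simp [h] at hmem)
      have h2 : q.roots.card ≤ 1 := hnd ▸ q.card_roots'
      omega
    have hcard : s.prod.roots.card = s.card := by
      rw [hroots, Multiset.card_bind]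
      have : Multiset.map (Multiset.card ∘ roots) s = Multiset.map (fun _ => 1) s :=
        Multiset.map_congr rfl hcard1
      rw [this]
      simp
    have hle : s.prod.natDegree ≤ s.card := by
      calc s.prod.natDegree ≤ (s.map natDegree).sum := natDegree_multiset_prod_le s
        _ = s.card := by
            have : Multiset.map natDegree s = Multiset.map (fun _ => 1) s :=
              Multiset.map_congr rfl (fun q hq => natDegree_eq_of_degree_eq_some (hs q hq))
            rw [this]
            simp
    have hge : s.prod.roots.card ≤ s.prod.natDegree := card_roots' _
    omega
  · intro h
    refine ⟨P.roots.map fun a => X - C a, ?_, ?_⟩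
    · intro q hq
      obtain ⟨a, _, rfl⟩ := Multiset.mem_map.mp hq
      exact degree_X_sub_C a
    · exact (prod_multiset_X_sub_C_of_monic_of_roots_card_eq hP h).symm

lemma split_step {Q : Polynomial ℤ} (hQ : Q.Monic) (h1 : 1 ≤ Q.natDegree) {e : ℤ}
    (h : Crumbles (Q ^ 2 - C e)) :
    ∃ m : ℤ, 0 ≤ m ∧ e = m ^ 2 ∧ Crumbles (Q - C m) ∧ Crumbles (Q + C m) := by
  have hPm : (Q ^ 2 - C e).Monic := monic_sq_sub_C hQ h1 e
  have hcard : (Q ^ 2 - C e).roots.card = (Q ^ 2 - C e).natDegree := (crumbles_iff hPm).mp h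
  have hnd : (Q ^ 2 - C e).natDegree = 2 * Q.natDegree := by
    rw [natDegree_sub_C, natDegree_pow]
  have hpos : 0 < (Q ^ 2 - C e).roots.card := by omega
  obtain ⟨r, hr⟩ := Multiset.card_pos_iff_exists_mem.mp hpos
  have hr0 : (Q ^ 2 - C e).eval r = 0 := (mem_roots hPm.ne_zero).mp hr
  have heq : e = (Q.eval r) ^ 2 := by
    have := hr0
    simp only [eval_sub, eval_pow, eval_C] at this
    omega
  refine ⟨|Q.eval r|, abs_nonneg _, by rw [heq, sq_abs], ?_, ?_⟩
  all_goals {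
    have hfac : Q ^ 2 - C e = (Q - C |Q.eval r|) * (Q + C |Q.eval r|) := by
      rw [heq, ← sq_abs (Q.eval r), map_pow]; ring
    have hm1 : (Q - C |Q.eval r|).Monic := monic_sub_C hQ h1 _
    have hm2 : (Q + C |Q.eval r|).Monic := by
      have := monic_sub_C hQ h1 (-|Q.eval r|)
      rwa [map_neg, sub_neg_eq_add] at this
    have hroots : (Q ^ 2 - C e).roots = (Q - C |Q.eval r|).roots + (Q + C |Q.eval r|).roots := by
      rw [hfac, roots_mul (mul_ne_zero hm1.ne_zero hm2.ne_zero)]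
    have hc1 : (Q - C |Q.eval r|).roots.card ≤ Q.natDegree := by
      have := (Q - C |Q.eval r|).card_roots'
      rwa [natDegree_sub_C] at this
    have hc2 : (Q + C |Q.eval r|).roots.card ≤ Q.natDegree := by
      have := (Q + C |Q.eval r|).card_roots'
      rwa [natDegree_add_C] at this
    have hsum : (Q - C |Q.eval r|).roots.card + (Q + C |Q.eval r|).roots.card
        = 2 * Q.natDegree := by
      rw [← Multiset.card_add, ← hroots, hcard, hnd]
    first
    | exact (crumbles_iff hm1).mpr (by rw [natDegree_sub_C]; omega)
    | exact (crumbles_iff hm2).mpr (by rw [natDegree_add_C]; omega)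
  }

lemma chain_shift (c : ℕ → ℤ) (j : ℕ) (d : ℤ) :
    chain c (j + 1) - C d = (chain c j) ^ 2 - C (c (j + 1) + d) := by
  show (chain c j) ^ 2 - C (c (j+1)) - C d = _
  rw [map_add]; ring

lemma sqrt_spec {e m : ℤ} (hm : 0 ≤ m) (he : e = m ^ 2) : Int.sqrt e = m := by
  rw [he, sq, Int.sqrt_eq, Int.natAbs_of_nonneg hm]

lemma Tstep (c : ℕ → ℤ) (j : ℕ) (T : Finset ℤ)
    (hT : ∀ d ∈ T, Crumbles (chain c (j + 1) - C d)) :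
    ∃ T' : Finset ℤ, 2 * T.card - 1 ≤ T'.card ∧ (∀ d ∈ T', -d ∈ T') ∧
      ∀ d ∈ T', Crumbles (chain c j - C d) := by
  classical
  set f : ℤ → ℤ := fun d => Int.sqrt (c (j + 1) + d) with hf
  have key : ∀ d ∈ T, 0 ≤ f d ∧ c (j + 1) + d = (f d) ^ 2 ∧
      Crumbles (chain c j - C (f d)) ∧ Crumbles (chain c j + C (f d)) := by
    intro d hd
    have h := hT d hd
    rw [chain_shift] at h
    obtain ⟨m, hm0, hme, hc1, hc2⟩ := split_step (chain_monic c j)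
      (by rw [chain_natDegree]; exact Nat.one_le_two_pow) h
    have : f d = m := sqrt_spec hm0 hme
    rw [this]
    exact ⟨hm0, hme, hc1, hc2⟩
  have finj : Set.InjOn f T := by
    intro x hx y hy hxy
    have h1 := (key x hx).2.1
    have h2 := (key y hy).2.1
    have : c (j+1) + x = c (j+1) + y := by rw [h1, h2, hxy]
    omega
  have ginj : Set.InjOn (fun d => -(f d)) T := by
    intro x hx y hy hxy
    exact finj hx hy (by simpa using hxy)
  refine ⟨T.image f ∪ T.image (fun d => -(f d)), ?_, ?_, ?_⟩
  · have hA : (T.image f).card = T.card := Finset.card_image_of_injOn finj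
    have hB : (T.image (fun d => -(f d))).card = T.card := Finset.card_image_of_injOn ginj
    have hint : (T.image f ∩ T.image (fun d => -(f d))).card ≤ 1 := by
      apply Finset.card_le_one.mpr
      intro a ha b hb
      have haa : a = 0 := by
        obtain ⟨ha1, ha2⟩ := Finset.mem_inter.mp ha
        obtain ⟨x, hx, rfl⟩ := Finset.mem_image.mp ha1
        obtain ⟨y, hy, hye⟩ := Finset.mem_image.mp ha2
        have := (key x hx).1
        have := (key y hy).1
        omega
      have hbb : b = 0 := by
        obtain ⟨hb1, hb2⟩ := Finset.mem_inter.mp hb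
        obtain ⟨x, hx, rfl⟩ := Finset.mem_image.mp hb1
        obtain ⟨y, hy, hye⟩ := Finset.mem_image.mp hb2
        have := (key x hx).1
        have := (key y hy).1
        omega
      rw [haa, hbb]
    have := Finset.card_union_add_card_inter (T.image f) (T.image (fun d => -(f d)))
    omega
  · intro d hd
    rcases Finset.mem_union.mp hd with h | h
    · obtain ⟨x, hx, rfl⟩ := Finset.mem_image.mp h
      exact Finset.mem_union_right _ (Finset.mem_image.mpr ⟨x, hx, rfl⟩)
    · obtain ⟨x, hx, rfl⟩ := Finset.mem_image.mp h
      exact Finset.mem_union_left _ (Finset.mem_image.mpr ⟨x, hx, by simp⟩)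
  · intro d hd
    rcases Finset.mem_union.mp hd with h | h
    · obtain ⟨x, hx, rfl⟩ := Finset.mem_image.mp h
      exact (key x hx).2.2.1
    · obtain ⟨x, hx, rfl⟩ := Finset.mem_image.mp h
      have := (key x hx).2.2.2
      rwa [map_neg, sub_neg_eq_add]

lemma descend (c : ℕ → ℤ) (i : ℕ) : ∀ (j : ℕ) (T : Finset ℤ), 2 ≤ T.card →
    (∀ d ∈ T, -d ∈ T) →
    (∀ d ∈ T, Crumbles (chain c (j + 1 + i) - C d)) →
    ∃ T' : Finset ℤ, 2 ^ i + 1 ≤ T'.card ∧ (∀ d ∈ T', -d ∈ T') ∧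
      ∀ d ∈ T', Crumbles (chain c (j + 1) - C d) := by
  induction i with
  | zero => exact fun j T h2 hsym hT => ⟨T, by omega, hsym, hT⟩
  | succ i ih =>
    intro j T h2 hsym hT
    have heq : j + 1 + (i + 1) = (j + 1) + 1 + i := by omega
    rw [heq] at hT
    obtain ⟨T', hc', hsym', hT'⟩ := ih (j + 1) T h2 hsym hT
    obtain ⟨T'', hc'', hsym'', hT''⟩ := Tstep c (j + 1) T' hT'
    refine ⟨T'', by omega, hsym'', hT''⟩

theorem stmt_17 :
    ∃ lam : ℝ, 0 < lam ∧
      ∀ (k : ℕ) (c : ℕ → ℤ), Crumbles (chain c k) → 3 ≤ k → 0 < c k →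
        Real.log (c 1) ≥ 2 * lam * k := by
  classical
  have hlog2 : 0 < Real.log 2 := Real.log_pos (by norm_num)
  refine ⟨Real.log 2 / 6, by positivity, ?_⟩
  intro k c hcr hk hpos
  obtain ⟨j, rfl⟩ : ∃ j, k = j + 3 := ⟨k - 3, by omega⟩
  -- first split at the top level
  have hcr' : Crumbles ((chain c (j + 2)) ^ 2 - C (c (j + 3))) := hcr
  obtain ⟨m, hm0, hme, hc1, hc2⟩ := split_step (chain_monic c (j + 2))
    (by rw [chain_natDegree]; exact Nat.one_le_two_pow) hcr'
  have hmpos : 0 < m := by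
    rcases lt_or_eq_of_le hm0 with h | h
    · exact h
    · exfalso; rw [← h] at hme; simp at hme; omega
  -- initial symmetric set {m, -m}
  set T₀ : Finset ℤ := {m, -m} with hT₀
  have hT₀card : T₀.card = 2 := by
    rw [hT₀, Finset.card_insert_of_notMem (by simp; omega), Finset.card_singleton]
  have hT₀sym : ∀ d ∈ T₀, -d ∈ T₀ := by
    intro d hd
    rw [hT₀] at hd ⊢
    simp at hd ⊢
    rcases hd with rfl | rfl
    · right; rfl
    · left; omega
  have hT₀cr : ∀ d ∈ T₀, Crumbles (chain c (j + 2) - C d) := by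
    intro d hd
    rw [hT₀] at hd
    simp at hd
    rcases hd with rfl | rfl
    · exact hc1
    · rwa [map_neg, sub_neg_eq_add]
  -- descend to level 1
  have hT₀cr' : ∀ d ∈ T₀, Crumbles (chain c (0 + 1 + (j + 1)) - C d) := by
    have : 0 + 1 + (j + 1) = j + 2 := by omega
    rw [this]
    exact hT₀cr
  obtain ⟨T, hTcard, hTsym, hTcr⟩ := descend c (j + 1) 0 T₀ (by omega) hT₀sym hT₀cr'
  -- at level 1 : chain c 1 - C d = X^2 - C (c 1 + d)
  set g : ℤ → ℤ := fun d => Int.sqrt (c 1 + d) with hg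
  have key : ∀ d ∈ T, 0 ≤ g d ∧ c 1 + d = (g d) ^ 2 := by
    intro d hd
    have h := hTcr d hd
    rw [chain_shift] at h
    obtain ⟨w, hw0, hwe, _, _⟩ := split_step (chain_monic c 0)
      (by rw [chain_natDegree]; exact Nat.one_le_two_pow) h
    have : g d = w := sqrt_spec hw0 hwe
    rw [this]
    exact ⟨hw0, hwe⟩
  have ginj : Set.InjOn g T := by
    intro x hx y hy hxy
    have h1 := (key x hx).2
    have h2 := (key y hy).2
    have : c 1 + x = c 1 + y := by rw [h1, h2, hxy]
    omega
  set S : Finset ℤ := T.image g with hS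
  have hScard : S.card = T.card := Finset.card_image_of_injOn ginj
  have hSbd : ∀ s ∈ S, 0 ≤ s ∧ s ^ 2 ≤ 2 * c 1 := by
    intro s hs
    obtain ⟨d, hd, rfl⟩ := Finset.mem_image.mp hs
    refine ⟨(key d hd).1, ?_⟩
    have h1 := (key d hd).2
    have hnd : -d ∈ T := hTsym d hd
    have h2 := (key (-d) hnd).2
    have h3 : 0 ≤ (g (-d)) ^ 2 := sq_nonneg _
    omega
  have hSne : S.Nonempty := by
    rw [← Finset.card_pos, hScard]
    exact Nat.lt_of_lt_of_le (Nat.succ_pos _) hTcard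
  set M : ℤ := S.max' hSne with hM
  have hMmem : M ∈ S := S.max'_mem hSne
  have hM0 : 0 ≤ M := (hSbd M hMmem).1
  have hMsq : M ^ 2 ≤ 2 * c 1 := (hSbd M hMmem).2
  have hsub : S ⊆ Finset.Icc 0 M := by
    intro s hs
    rw [Finset.mem_Icc]
    exact ⟨(hSbd s hs).1, S.le_max' s hs⟩
  have hcardle : S.card ≤ (M + 1).toNat := by
    have := Finset.card_le_card hsub
    rwa [Int.card_Icc, sub_zero] at this
  have hMge : (2 : ℤ) ^ (j + 1) ≤ M := by
    have h1 : (2 : ℕ) ^ (j + 1) + 1 ≤ (M + 1).toNat := by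
      rw [hScard] at hcardle
      omega
    have h2 : ((2 : ℕ) ^ (j + 1) + 1 : ℤ) ≤ M + 1 := by
      calc ((2 : ℕ) ^ (j + 1) + 1 : ℤ) ≤ ((M + 1).toNat : ℤ) := by exact_mod_cast h1
        _ = M + 1 := Int.toNat_of_nonneg (by omega)
    push_cast at h2
    linarith
  -- conclude c 1 ≥ 2 ^ (2j+1)
  have hfin : (2 : ℤ) ^ (2 * j + 1) ≤ c 1 := by
    have h1 : (2 : ℤ) ^ (2 * j + 2) ≤ M ^ 2 := by
      have : ((2 : ℤ) ^ (j + 1)) ^ 2 ≤ M ^ 2 := by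
        apply pow_le_pow_left₀ (by positivity) hMge
      calc (2 : ℤ) ^ (2 * j + 2) = ((2 : ℤ) ^ (j + 1)) ^ 2 := by ring
        _ ≤ M ^ 2 := this
    have h2 : (2 : ℤ) ^ (2 * j + 2) = 2 * 2 ^ (2 * j + 1) := by ring
    omega
  -- real-number conclusion
  have hc1pos : (0 : ℝ) < (c 1 : ℝ) := by
    have : (0 : ℤ) < c 1 := lt_of_lt_of_le (by positivity) hfin
    exact_mod_cast this
  have hlogle : ((2 * j + 1 : ℕ) : ℝ) * Real.log 2 ≤ Real.log (c 1) := by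
    have hcast : (2 : ℝ) ^ (2 * j + 1) ≤ (c 1 : ℝ) := by exact_mod_cast hfin
    have := Real.log_le_log (by positivity) hcast
    rwa [Real.log_pow] at this
  rw [ge_iff_le]
  push_cast at hlogle ⊢
  nlinarith [hlog2, Nat.cast_nonneg (α := ℝ) j]
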